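/- Let q ≥ 5 be an odd prime power with q ≡ 1 (mod 3) such that 2 is a cube in F_q. Then there are exactly three β ∈ F_q for which the cubic polynomial t³ - 3βt² - 1 has exactly two roots in F_q, and the number of β ∈ F_q for which it has exactly one root in F_q equals the number of β ∈ F_q with η(1 + 4β³) = -1. -/

import Mathlib

open scoped Classical

/-- The quadratic character of a field: `η a = 1` if `a` is a nonzero square,
`η a = -1` if `a` is a non-square, and `η 0 = 0`. -/
noncomputable def quadChar (F : Type*) [Field F] (a : F) : ℤ :=
  if a = 0 then 0 else if IsSquare a then 1 else -1

/-!
The discriminant of `t³ - 3βt² - 1` is `-27 (1 + 4β³)`, and `-3` is a square in `F` because `F`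
contains a primitive cube root of unity. A repeated root occurs exactly when `1 + 4β³ = 0`, that is
`β³ = -1/4`, which has three solutions since `2` is a cube. Otherwise the roots are simple: two
roots in `F` force the third one (their sum is `3β`), so the discriminant is a square; and after
splitting off a root `r`, the remaining quadratic factor has discriminant `-3 (1 + 4β³)` up to a
nonzero square, so it has roots exactly when `1 + 4β³` is a square. Finally, if `1 + 4β³` is not a
square the cubic has a root in `F`: otherwise it is irreducible, its roots `r, r^q, r^{q²}` are
permuted cyclically by the Frobenius, so `(r - r^q)(r^q - r^{q²})(r^{q²} - r)` lies in `F`, and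
its square is the discriminant.
-/

open Polynomial

theorem quadChar_eq_neg_one_iff {F : Type*} [Field F] (a : F) :
    quadChar F a = -1 ↔ ¬ IsSquare a := by
  unfold quadChar
  split_ifs <;> simp_all

/-- The discriminant of the cubic `t³ - 3βt² - 1`. -/
def cubicDisc {K : Type*} [Field K] (β : K) : K := -27 * (1 + 4 * β ^ 3)

section Cubic

variable {K : Type*} [Field K] {β r r₁ r₂ : K}

theorem vieta_of_roots (h₁ : r₁ ^ 3 - 3 * β * r₁ ^ 2 - 1 = 0)
    (h₂ : r₂ ^ 3 - 3 * β * r₂ ^ 2 - 1 = 0) (hne : r₁ ≠ r₂) :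
    r₁ * r₂ + r₂ * (3 * β - r₁ - r₂) + (3 * β - r₁ - r₂) * r₁ = 0 ∧
      r₁ * r₂ * (3 * β - r₁ - r₂) = 1 := by
  have hsum : r₁ ^ 2 + r₁ * r₂ + r₂ ^ 2 = 3 * β * (r₁ + r₂) :=
    mul_left_cancel₀ (sub_ne_zero.mpr hne) (by linear_combination h₁ - h₂)
  exact ⟨by linear_combination -hsum, by linear_combination h₁ - r₁ * hsum⟩

theorem cubic_eq_mul_of_roots (h₁ : r₁ ^ 3 - 3 * β * r₁ ^ 2 - 1 = 0)
    (h₂ : r₂ ^ 3 - 3 * β * r₂ ^ 2 - 1 = 0) (hne : r₁ ≠ r₂) (t : K) :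
    t ^ 3 - 3 * β * t ^ 2 - 1 = (t - r₁) * (t - r₂) * (t - (3 * β - r₁ - r₂)) := by
  obtain ⟨he₂, he₃⟩ := vieta_of_roots h₁ h₂ hne
  linear_combination (-t) * he₂ + he₃

theorem cubicDisc_eq_sq_of_roots (h₁ : r₁ ^ 3 - 3 * β * r₁ ^ 2 - 1 = 0)
    (h₂ : r₂ ^ 3 - 3 * β * r₂ ^ 2 - 1 = 0) (hne : r₁ ≠ r₂) :
    cubicDisc β =
      ((r₁ - r₂) * (r₂ - (3 * β - r₁ - r₂)) * ((3 * β - r₁ - r₂) - r₁)) ^ 2 := by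
  obtain ⟨he₂, he₃⟩ := vieta_of_roots h₁ h₂ hne
  set u := 3 * β - r₁ - r₂
  set e₂ := r₁ * r₂ + r₂ * u + u * r₁
  set e₃ := r₁ * r₂ * u
  unfold cubicDisc
  linear_combination -(9 * β ^ 2 * e₂ - 4 * e₂ ^ 2 + 54 * β * e₃) * he₂ -
    (-108 * β ^ 3 - 27 * (e₃ + 1)) * he₃

theorem neg_twentySeven_ne_zero (h3 : (3 : K) ≠ 0) : (-27 : K) ≠ 0 := by
  rw [show (-27 : K) = -3 ^ 3 by norm_num]
  exact neg_ne_zero.mpr (pow_ne_zero 3 h3)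

theorem isSquare_of_isSquare_cubicDisc (h3 : (3 : K) ≠ 0) (hs : IsSquare (-3 : K))
    (h : IsSquare (cubicDisc β)) : IsSquare (1 + 4 * β ^ 3) := by
  have h27 : IsSquare (-27 : K) := by
    obtain ⟨s, hs⟩ := hs
    exact ⟨3 * s, by linear_combination 9 * hs⟩
  rw [show 1 + 4 * β ^ 3 = cubicDisc β / -27 by
    rw [cubicDisc, mul_div_cancel_left₀ _ (neg_twentySeven_ne_zero h3)]]
  exact h.div h27

theorem roots_eq_pair_of_one_add_four_mul_cube_eq_zero (hD : 1 + 4 * β ^ 3 = 0) :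
    {t : K | t ^ 3 - 3 * β * t ^ 2 - 1 = 0} = {2 * β, -β} := by
  ext t
  have hfac : t ^ 3 - 3 * β * t ^ 2 - 1 = (t - 2 * β) ^ 2 * (t + β) := by
    linear_combination -hD
  show t ^ 3 - 3 * β * t ^ 2 - 1 = 0 ↔ t = 2 * β ∨ t = -β
  rw [hfac, mul_eq_zero, pow_eq_zero_iff two_ne_zero, sub_eq_zero, add_eq_zero_iff_eq_neg]

theorem ncard_roots_eq_two_iff (h3 : (3 : K) ≠ 0) :
    {t : K | t ^ 3 - 3 * β * t ^ 2 - 1 = 0}.ncard = 2 ↔ 1 + 4 * β ^ 3 = 0 := by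
  constructor
  · intro h
    obtain ⟨r₁, r₂, hne, hset⟩ := Set.ncard_eq_two.mp h
    have hmem : ∀ t, t ^ 3 - 3 * β * t ^ 2 - 1 = 0 ↔ t = r₁ ∨ t = r₂ := fun t =>
      Set.ext_iff.mp hset t
    have h₁ := (hmem r₁).mpr (Or.inl rfl)
    have h₂ := (hmem r₂).mpr (Or.inr rfl)
    have hu := (hmem (3 * β - r₁ - r₂)).mp
      (by rw [cubic_eq_mul_of_roots h₁ h₂ hne]; ring)
    have hdisc : cubicDisc β = 0 := by
      rw [cubicDisc_eq_sq_of_roots h₁ h₂ hne]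
      rcases hu with hu | hu <;> simp [hu]
    exact (mul_eq_zero.mp hdisc).resolve_left (neg_twentySeven_ne_zero h3)
  · intro hD
    have hβ : β ≠ 0 := by rintro rfl; norm_num at hD
    rw [roots_eq_pair_of_one_add_four_mul_cube_eq_zero hD]
    refine Set.ncard_pair fun h => hβ ?_
    exact (mul_eq_zero.mp (by linear_combination h : 3 * β = 0)).resolve_left h3

theorem exists_root_ne_of_isSquare (h2 : (2 : K) ≠ 0) (h3 : (3 : K) ≠ 0) (hs : IsSquare (-3 : K))
    (hD : IsSquare (1 + 4 * β ^ 3)) (hD0 : 1 + 4 * β ^ 3 ≠ 0)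
    (hr : r ^ 3 - 3 * β * r ^ 2 - 1 = 0) :
    ∃ z, z ^ 3 - 3 * β * z ^ 2 - 1 = 0 ∧ z ≠ r := by
  have : NeZero (2 : K) := ⟨h2⟩
  have hfac : ∀ t, t ^ 3 - 3 * β * t ^ 2 - 1 =
      (t - r) * (1 * (t * t) + (r - 3 * β) * t + r * (r - 3 * β)) := fun t => by
    linear_combination hr
  -- `1 + 4β³` is, up to the square `(r (r - 2β))²`, the discriminant of the quadratic factor
  -- divided by `-3`.
  have hDr : 1 + 4 * β ^ 3 = (r - 3 * β) * (r + β) * (r * (r - 2 * β)) ^ 2 := by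
    linear_combination (-(r ^ 3 - 3 * β * r ^ 2 + 1 + 4 * β ^ 3)) * hr
  have hm : r * (r - 2 * β) ≠ 0 := fun h => hD0 (by rw [hDr, h]; ring)
  obtain ⟨s, hs⟩ := hs
  obtain ⟨d, hd⟩ := hD
  have hdisc : discrim 1 (r - 3 * β) (r * (r - 3 * β)) =
      s * d / (r * (r - 2 * β)) * (s * d / (r * (r - 2 * β))) := by
    rw [discrim, div_mul_div_comm, eq_div_iff (mul_self_ne_zero.mpr hm)]
    linear_combination d * d * hs - 3 * hd + 3 * hDr
  obtain ⟨z, hz⟩ := exists_quadratic_eq_zero one_ne_zero ⟨_, hdisc⟩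
  refine ⟨z, by rw [hfac, hz, mul_zero], ?_⟩
  rintro rfl
  exact hm ((mul_eq_zero.mp (by linear_combination hz : 3 * (z * (z - 2 * β)) = 0)).resolve_left h3)

end Cubic

theorem IsPrimitiveRoot.isSquare_neg_three {K : Type*} [Field K] {ω : K}
    (hω : IsPrimitiveRoot ω 3) : IsSquare (-3 : K) := by
  have h := hω.geom_sum_eq_zero (by norm_num)
  simp only [Finset.sum_range_succ, Finset.sum_range_zero] at h
  exact ⟨2 * ω + 1, by linear_combination -4 * h⟩

theorem IsPrimitiveRoot.ncard_setOf_pow_eq {K : Type*} [Field K] {n : ℕ} {ζ : K}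
    (hζ : IsPrimitiveRoot ζ n) (hn : 0 < n) {a α : K} (hα : α ^ n = a) (ha : a ≠ 0) :
    {x : K | x ^ n = a}.ncard = n := by
  have hset : {x : K | x ^ n = a} = ↑(nthRootsFinset n a) := by
    ext x
    simp [Polynomial.mem_nthRootsFinset hn]
  rw [hset, Set.ncard_coe_finset, nthRootsFinset,
    Multiset.toFinset_card_of_nodup (hζ.nthRoots_nodup ha), hζ.card_nthRoots, if_pos ⟨α, hα⟩]

theorem ncard_setOf_one_add_four_mul_cube_eq_zero {K : Type*} [Field K] {ω x : K}
    (hω : IsPrimitiveRoot ω 3) (h2 : (2 : K) ≠ 0) (hx : x ^ 3 = 2) :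
    {β : K | 1 + 4 * β ^ 3 = 0}.ncard = 3 := by
  have hx0 : x ≠ 0 := by rintro rfl; norm_num at hx; exact h2 hx.symm
  have h4 : (4 : K) ≠ 0 := by simpa [show (4 : K) = 2 * 2 by norm_num] using h2
  have hset : {β : K | 1 + 4 * β ^ 3 = 0} = {β : K | β ^ 3 = -1 / 4} := by
    ext β
    change 1 + 4 * β ^ 3 = 0 ↔ β ^ 3 = -1 / 4
    rw [eq_div_iff h4]
    constructor <;> intro h <;> linear_combination h
  rw [hset, hω.ncard_setOf_pow_eq (by norm_num) (α := -(x ^ 2)⁻¹) ?_ (by simp [h4])]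
  field_simp
  linear_combination (x ^ 3 + 2) * hx

section FiniteField

variable {F : Type*} [Field F] [Fintype F]

theorem natCast_ne_zero_of_card_mod_eq_one {m : ℕ} (h : Fintype.card F % m = 1) :
    (m : F) ≠ 0 := by
  intro hm
  have hcard := FiniteField.cast_card_eq_zero F
  rw [← Nat.div_add_mod (Fintype.card F) m, h] at hcard
  push_cast at hcard
  rw [hm, zero_mul, zero_add] at hcard
  exact one_ne_zero hcard

theorem exists_isPrimitiveRoot_of_card_mod_eq_one {p : ℕ} [Fact p.Prime]
    (h : Fintype.card F % p = 1) : ∃ ω : F, IsPrimitiveRoot ω p := by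
  have hdvd : p ∣ Fintype.card Fˣ := by
    rw [Fintype.card_units, ← Nat.div_add_mod (Fintype.card F) p, h, Nat.add_sub_cancel]
    exact dvd_mul_right p _
  obtain ⟨ζ, hζ⟩ := exists_prime_orderOf_dvd_card p hdvd
  exact ⟨ζ, IsPrimitiveRoot.coe_units_iff.mpr (hζ ▸ IsPrimitiveRoot.orderOf ζ)⟩

theorem mem_range_algebraMap_of_pow_card_eq {K : Type*} [CommRing K] [IsDomain K] [Algebra F K]
    {x : K} (hx : x ^ Fintype.card F = x) : x ∈ (algebraMap F K).range := by
  have hsplit : (X ^ Fintype.card F - X : F[X]).Splits := by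
    rw [splits_iff_card_roots, FiniteField.roots_X_pow_card_sub_X,
      FiniteField.X_pow_card_sub_X_natDegree_eq F Fintype.one_lt_card]
    rfl
  exact hsplit.mem_range_of_isRoot (FiniteField.X_pow_card_sub_X_ne_zero F Fintype.one_lt_card)
    (by simp [hx])

theorem isSquare_cubicDisc_of_card_eq_pow_three {K : Type*} [Field K] [Fintype K] [Algebra F K]
    (hK : Fintype.card K = Fintype.card F ^ 3) {β : F}
    (hF : ∀ t : F, t ^ 3 - 3 * β * t ^ 2 - 1 ≠ 0) {r : K}
    (hr : r ^ 3 - 3 * algebraMap F K β * r ^ 2 - 1 = 0) : IsSquare (cubicDisc β) := by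
  set σ := FiniteField.frobeniusAlgHom F K
  have hroot : ∀ x : K, x ^ 3 - 3 * algebraMap F K β * x ^ 2 - 1 = 0 →
      σ x ^ 3 - 3 * algebraMap F K β * σ x ^ 2 - 1 = 0 := fun x hx => by
    simpa [σ.commutes, map_ofNat] using congrArg σ hx
  have hσ3 : σ (σ (σ r)) = r := by
    simp only [σ, FiniteField.frobeniusAlgHom_apply, ← pow_mul]
    rw [mul_assoc, ← pow_three, ← hK, FiniteField.pow_card]
  have h₀₁ : r ≠ σ r := fun h => by
    obtain ⟨a, rfl⟩ := mem_range_algebraMap_of_pow_card_eq h.symm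
    exact hF a ((algebraMap F K).injective (by simpa [map_ofNat] using hr))
  have h₁₂ : σ r ≠ σ (σ r) := fun h => h₀₁ (σ.toRingHom.injective h)
  have h₂₀ : σ (σ r) ≠ r := fun h => h₀₁ (hσ3.symm.trans (congrArg σ h))
  have hthird : σ (σ r) = 3 * algebraMap F K β - r - σ r := by
    have h := cubic_eq_mul_of_roots hr (hroot r hr) h₀₁ (σ (σ r))
    rw [hroot _ (hroot _ hr), eq_comm, mul_eq_zero, mul_eq_zero, sub_eq_zero, sub_eq_zero,
      sub_eq_zero] at h
    exact h.resolve_left (not_or.mpr ⟨h₂₀, h₁₂.symm⟩)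
  set δ := (r - σ r) * (σ r - σ (σ r)) * (σ (σ r) - r)
  have hδ : σ δ = δ := by
    simp only [δ, map_mul, map_sub, hσ3]
    ring
  obtain ⟨a, ha⟩ := mem_range_algebraMap_of_pow_card_eq hδ
  refine ⟨a, (algebraMap F K).injective ?_⟩
  have hmap : algebraMap F K (cubicDisc β) = cubicDisc (algebraMap F K β) := by
    simp [cubicDisc, map_ofNat]
  rw [map_mul, ha, ← sq, hmap, cubicDisc_eq_sq_of_roots hr (hroot r hr) h₀₁, ← hthird]

theorem isSquare_cubicDisc_of_forall_ne_zero {β : F}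
    (hF : ∀ t : F, t ^ 3 - 3 * β * t ^ 2 - 1 ≠ 0) : IsSquare (cubicDisc β) := by
  set P : F[X] := X ^ 3 - C (3 * β) * X ^ 2 - 1
  have hdeg : P.natDegree = 3 := by
    unfold P
    compute_degree!
  have hP : Irreducible P :=
    irreducible_of_degree_le_three_of_not_isRoot (by simp [hdeg]) fun t => by simpa [P] using hF t
  have : Fact (Irreducible P) := ⟨hP⟩
  let pb := AdjoinRoot.powerBasis hP.ne_zero
  have : Module.Finite F (AdjoinRoot P) := pb.finite
  have : Finite (AdjoinRoot P) := Module.finite_of_finite F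
  let : Fintype (AdjoinRoot P) := Fintype.ofFinite _
  refine isSquare_cubicDisc_of_card_eq_pow_three (K := AdjoinRoot P) ?_ hF
    (r := AdjoinRoot.root P) ?_
  · rw [Module.card_eq_pow_finrank (K := F), pb.finrank, AdjoinRoot.powerBasis_dim, hdeg]
  · simpa [P, map_ofNat] using AdjoinRoot.eval₂_root P

theorem ncard_roots_eq_one_iff {β : F} (h2 : (2 : F) ≠ 0) (h3 : (3 : F) ≠ 0)
    (hs : IsSquare (-3 : F)) :
    {t : F | t ^ 3 - 3 * β * t ^ 2 - 1 = 0}.ncard = 1 ↔ ¬ IsSquare (1 + 4 * β ^ 3) := by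
  constructor
  · intro h hD
    obtain ⟨r, hset⟩ := Set.ncard_eq_one.mp h
    have hmem : ∀ t, t ^ 3 - 3 * β * t ^ 2 - 1 = 0 ↔ t = r := fun t => Set.ext_iff.mp hset t
    have hD0 : 1 + 4 * β ^ 3 ≠ 0 := fun hD0 => by
      have := (ncard_roots_eq_two_iff h3).mpr hD0
      omega
    obtain ⟨z, hz, hzr⟩ := exists_root_ne_of_isSquare h2 h3 hs hD hD0 ((hmem r).mpr rfl)
    exact hzr ((hmem z).mp hz)
  · intro hD
    have hsq : ∀ {r₁ r₂ : F}, r₁ ^ 3 - 3 * β * r₁ ^ 2 - 1 = 0 →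
        r₂ ^ 3 - 3 * β * r₂ ^ 2 - 1 = 0 → r₁ = r₂ := fun h₁ h₂ => by
      by_contra hne
      exact hD (isSquare_of_isSquare_cubicDisc h3 hs
        (cubicDisc_eq_sq_of_roots h₁ h₂ hne ▸ IsSquare.sq _))
    obtain ⟨r, hr⟩ : ∃ r : F, r ^ 3 - 3 * β * r ^ 2 - 1 = 0 := by
      by_contra! hF
      exact hD (isSquare_of_isSquare_cubicDisc h3 hs (isSquare_cubicDisc_of_forall_ne_zero hF))
    exact Set.ncard_eq_one.mpr ⟨r, Set.ext fun t => ⟨fun ht => hsq ht hr, fun ht => ht ▸ hr⟩⟩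

end FiniteField

theorem stmt2 (q : ℕ) (hodd : Odd q) (hq3 : q % 3 = 1)
    (F : Type*) [Field F] [Fintype F] (hcard : Fintype.card F = q)
    (h2 : ∃ x : F, x ^ 3 = 2) :
    ({β : F | ({t : F | t ^ 3 - 3 * β * t ^ 2 - 1 = 0} : Set F).ncard = 2} : Set F).ncard = 3 ∧
    ({β : F | ({t : F | t ^ 3 - 3 * β * t ^ 2 - 1 = 0} : Set F).ncard = 1} : Set F).ncard
      = ({β : F | quadChar F (1 + 4 * β ^ 3) = -1} : Set F).ncard := by
  have h2F : (2 : F) ≠ 0 := by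
    exact_mod_cast natCast_ne_zero_of_card_mod_eq_one (F := F) (m := 2)
      (hcard ▸ Nat.odd_iff.mp hodd)
  have h3F : (3 : F) ≠ 0 := by
    exact_mod_cast natCast_ne_zero_of_card_mod_eq_one (F := F) (m := 3) (hcard ▸ hq3)
  obtain ⟨ω, hω⟩ := exists_isPrimitiveRoot_of_card_mod_eq_one (F := F) (p := 3) (hcard ▸ hq3)
  refine ⟨?_, ?_⟩
  · obtain ⟨x, hx⟩ := h2
    calc _ = {β : F | 1 + 4 * β ^ 3 = 0}.ncard := by
          congr 1
          ext β
          exact ncard_roots_eq_two_iff h3F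
      _ = 3 := ncard_setOf_one_add_four_mul_cube_eq_zero hω h2F hx
  · congr 1
    ext β
    exact (ncard_roots_eq_one_iff h2F h3F hω.isSquare_neg_three).trans
      (quadChar_eq_neg_one_iff _).symm
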